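/- The sequence (μ_n)_{n≥0} of probability measures on the 1-torus 𝕋 = ℝ/ℤ converges weakly to a probability measure μ on 𝕋. -/

import Mathlib

open MeasureTheory Filter Topology Real
open scoped ENNReal

noncomputable section

/-- Stern's diatomic sequence: s(0)=0, s(1)=1, s(2n)=s(n), s(2n+1)=s(n)+s(n+1). -/
def stern : ℕ → ℕ
  | 0 => 0
  | 1 => 1
  | n + 2 =>
    if h : n % 2 = 0 then stern (n / 2 + 1)
    else stern (n / 2 + 1) + stern (n / 2 + 2)
decreasing_by all_goals omega
/-- The probability measure μ_n = 3^{-n} ∑_{m=0}^{2^n-1} s(2^n+m) δ_{m/2^n} on the 1-torus. -/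
def sternMeasure (n : ℕ) : Measure UnitAddCircle :=
  ((3 : ℝ≥0∞) ^ n)⁻¹ • ∑ m ∈ Finset.range (2 ^ n),
    (stern (2 ^ n + m) : ℝ≥0∞) • Measure.dirac ((m / 2 ^ n : ℝ) : UnitAddCircle)

/-!
By the recursion for `stern`, `μ (n + 1)` arises from `μ n` by replacing each atom `δ x` with
`(δ (x - h) + δ x + δ (x + h)) / 3`, where `h = 2⁻⁽ⁿ⁺¹⁾`. Hence `μ (n + k)` is obtained from `μ n`
by moving mass a distance at most `∑ i > n, 2⁻ⁱ = 2⁻ⁿ`, so by uniform continuity the integrals of a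
continuous function against `μ n` form a Cauchy sequence. The probability measures on the compact
torus form a compact space, and any subsequential limit `μ` has `∫ f ∂μ` equal to the limit of the
whole sequence.
-/

lemma stern_one : stern 1 = 1 := by rw [stern]

lemma stern_two_mul (n : ℕ) : stern (2 * n) = stern n := by
  match n with
  | 0 => rfl
  | n + 1 =>
    show stern (2 * n + 2) = _
    rw [stern, dif_pos (by omega)]
    congr 1
    omega

lemma stern_two_mul_add_one (n : ℕ) : stern (2 * n + 1) = stern n + stern (n + 1) := by
  match n with
  | 0 => simp [stern]
  | n + 1 =>
    show stern (2 * n + 1 + 2) = _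
    rw [stern, dif_neg (by omega)]
    congr 2 <;> omega

lemma stern_two_pow (n : ℕ) : stern (2 ^ n) = 1 := by
  induction n with
  | zero => exact stern_one
  | succ n ih => rw [pow_succ, mul_comm, stern_two_mul, ih]

lemma sum_range_two_mul {M : Type*} [AddCommMonoid M] (g : ℕ → M) (a : ℕ) :
    ∑ k ∈ Finset.range (2 * a), g k = ∑ j ∈ Finset.range a, (g (2 * j) + g (2 * j + 1)) := by
  induction a with
  | zero => simp
  | succ a ih =>
    rw [mul_add_one, Finset.sum_range_succ, Finset.sum_range_succ, ih, Finset.sum_range_succ,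
      add_assoc]

lemma sum_range_succ_eq_of_eq {M : Type*} [AddCommGroup M] (a : ℕ → M) {K : ℕ} (h : a K = a 0) :
    ∑ j ∈ Finset.range K, a (j + 1) = ∑ j ∈ Finset.range K, a j := by
  rw [← sub_eq_zero, ← Finset.sum_sub_distrib, Finset.sum_range_sub, h, sub_self]

section ThreePointAvg

variable {G : Type*} [SeminormedAddCommGroup G]

def threePointAvg (h : G) (g : G → ℝ) (x : G) : ℝ := (g (x - h) + g x + g (x + h)) / 3

def iterThreePointAvg (h : ℕ → G) : ℕ → ℕ → (G → ℝ) → G → ℝ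
  | _, 0, g => g
  | n, k + 1, g => threePointAvg (h n) (iterThreePointAvg h (n + 1) k g)

lemma abs_threePointAvg_sub_le {h x : G} {g : G → ℝ} {c ε : ℝ}
    (hg : ∀ y, dist y x ≤ ‖h‖ → |g y - c| ≤ ε) : |threePointAvg h g x - c| ≤ ε := by
  obtain ⟨h₁, h₁'⟩ := abs_le.mp (hg (x - h) (by simp))
  obtain ⟨h₂, h₂'⟩ := abs_le.mp (hg x (by simp))
  obtain ⟨h₃, h₃'⟩ := abs_le.mp (hg (x + h) (by simp))
  rw [threePointAvg, abs_le]
  constructor <;> linarith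

-- `r n` bounds the total displacement `∑ i ≥ n, ‖h i‖` of the averages started at stage `n`.
lemma abs_iterThreePointAvg_sub_le {h : ℕ → G} {r : ℕ → ℝ} (hr : ∀ i, ‖h i‖ + r (i + 1) ≤ r i)
    (hr₀ : ∀ i, 0 ≤ r i) {g : G → ℝ} {c ε : ℝ} :
    ∀ (k n : ℕ) (x : G), (∀ y, dist y x ≤ r n → |g y - c| ≤ ε) →
      |iterThreePointAvg h n k g x - c| ≤ ε
  | 0, n, x, hg => hg x (by simpa using hr₀ n)
  | k + 1, n, x, hg => abs_threePointAvg_sub_le fun y hy =>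
      abs_iterThreePointAvg_sub_le hr hr₀ k (n + 1) y fun z hz =>
        hg z (by linarith [dist_triangle z y x, hr n])

end ThreePointAvg

def sternMean (n : ℕ) (g : UnitAddCircle → ℝ) : ℝ :=
  ((3 : ℝ) ^ n)⁻¹ *
    ∑ m ∈ Finset.range (2 ^ n), (stern (2 ^ n + m) : ℝ) * g ((m / 2 ^ n : ℝ) : UnitAddCircle)

def dyadicStep (n : ℕ) : UnitAddCircle := (((2 : ℝ) ^ (n + 1))⁻¹ : ℝ)

lemma norm_dyadicStep_add_le (n : ℕ) :
    ‖dyadicStep n‖ + ((2 : ℝ) ^ (n + 1))⁻¹ ≤ ((2 : ℝ) ^ n)⁻¹ := by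
  have h : ‖dyadicStep n‖ ≤ ((2 : ℝ) ^ (n + 1))⁻¹ := by
    unfold dyadicStep
    simpa [abs_of_pos] using
      QuotientAddGroup.norm_mk_le_norm (S := AddSubgroup.zmultiples (1 : ℝ))
        (m := ((2 : ℝ) ^ (n + 1))⁻¹)
  have h2 : ((2 : ℝ) ^ (n + 1))⁻¹ + ((2 : ℝ) ^ (n + 1))⁻¹ = ((2 : ℝ) ^ n)⁻¹ := by
    rw [pow_succ]; ring
  linarith

-- The odd atoms of `μ (n + 1)` are those of `μ n` shifted by one dyadic cell; the shift closes up
-- because `s(2ⁿ) = s(2ⁿ⁺¹)` and `1 = 0` on the circle.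
lemma sum_stern_succ_mul_eq (n : ℕ) (g : UnitAddCircle → ℝ) :
    ∑ j ∈ Finset.range (2 ^ n),
        (stern (2 ^ n + (j + 1)) : ℝ) * g ((j / 2 ^ n + ((2 : ℝ) ^ (n + 1))⁻¹ : ℝ))
      = ∑ j ∈ Finset.range (2 ^ n),
        (stern (2 ^ n + j) : ℝ) * g ((j / 2 ^ n - ((2 : ℝ) ^ (n + 1))⁻¹ : ℝ)) := by
  set h : ℝ := ((2 : ℝ) ^ (n + 1))⁻¹
  have hx_succ (j : ℕ) : ((j + 1 : ℕ) : ℝ) / 2 ^ n - h = j / 2 ^ n + h := by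
    simp only [h, pow_succ]; push_cast; ring
  refine (Finset.sum_congr rfl fun j _ => by rw [← hx_succ]).trans
    (sum_range_succ_eq_of_eq (fun j => (stern (2 ^ n + j) : ℝ) * g ((j / 2 ^ n - h : ℝ))) ?_)
  have hone : ((1 - h : ℝ) : UnitAddCircle) = ((0 - h : ℝ) : UnitAddCircle) := by
    rw [AddCircle.coe_sub, AddCircle.coe_sub, AddCircle.coe_period, AddCircle.coe_zero]
  have hdiv : (2 : ℝ) ^ n / 2 ^ n = 1 := div_self (by positivity)
  simp only [← two_mul, ← pow_succ', stern_two_pow, add_zero, Nat.cast_pow, Nat.cast_ofNat, hdiv,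
    CharP.cast_eq_zero, zero_div, hone]

lemma sternMean_succ (n : ℕ) (g : UnitAddCircle → ℝ) :
    sternMean (n + 1) g = sternMean n (threePointAvg (dyadicStep n) g) := by
  set h : ℝ := ((2 : ℝ) ^ (n + 1))⁻¹
  set s : ℕ → ℝ := fun j => (stern (2 ^ n + j) : ℝ)
  set x : ℕ → ℝ := fun j => (j : ℝ) / 2 ^ n
  have hpair (j : ℕ) :
      (stern (2 ^ (n + 1) + 2 * j) : ℝ) * g (((2 * j : ℕ) : ℝ) / 2 ^ (n + 1) : ℝ)
        + (stern (2 ^ (n + 1) + (2 * j + 1)) : ℝ) * g (((2 * j + 1 : ℕ) : ℝ) / 2 ^ (n + 1) : ℝ)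
      = s j * g (x j : ℝ) + s j * g (x j + h : ℝ) + s (j + 1) * g (x j + h : ℝ) := by
    have e₁ : 2 ^ (n + 1) + 2 * j = 2 * (2 ^ n + j) := by ring
    have e₂ : 2 ^ (n + 1) + (2 * j + 1) = 2 * (2 ^ n + j) + 1 := by ring
    have e₃ : ((2 * j : ℕ) : ℝ) / 2 ^ (n + 1) = x j := by
      simp only [x, pow_succ]; push_cast; field_simp
    have e₄ : ((2 * j + 1 : ℕ) : ℝ) / 2 ^ (n + 1) = x j + h := by
      simp only [x, h, pow_succ]; push_cast; field_simp
    rw [e₁, e₂, stern_two_mul, stern_two_mul_add_one, e₃, e₄]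
    simp only [s, Nat.cast_add, add_assoc]
    ring
  have hsplit : sternMean (n + 1) g = ((3 : ℝ) ^ (n + 1))⁻¹ * ∑ j ∈ Finset.range (2 ^ n),
      (s j * g (x j : ℝ) + s j * g (x j + h : ℝ) + s (j + 1) * g (x j + h : ℝ)) := by
    rw [sternMean, pow_succ' 2 n, sum_range_two_mul, ← pow_succ']
    exact congrArg _ (Finset.sum_congr rfl fun j _ => hpair j)
  rw [hsplit, Finset.sum_add_distrib, Finset.sum_add_distrib, sum_stern_succ_mul_eq, sternMean]
  simp only [threePointAvg, dyadicStep, ← AddCircle.coe_sub, ← AddCircle.coe_add, mul_div_assoc',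
    mul_add, Finset.sum_add_distrib, ← Finset.sum_div]
  rw [pow_succ]
  ring

lemma sternMean_add (n k : ℕ) (g : UnitAddCircle → ℝ) :
    sternMean (n + k) g = sternMean n (iterThreePointAvg dyadicStep n k g) := by
  induction k generalizing n with
  | zero => rfl
  | succ k ih => rw [← add_assoc, add_right_comm, ih, sternMean_succ]; rfl

lemma sternMean_const (n : ℕ) (c : ℝ) : sternMean n (fun _ => c) = c := by
  induction n with
  | zero => simp [sternMean, stern_one]
  | succ n ih =>
    have hc : threePointAvg (dyadicStep n) (fun _ => c) = fun _ => c :=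
      funext fun _ => by simp only [threePointAvg]; ring
    rw [sternMean_succ, hc, ih]

lemma sternMean_mono (n : ℕ) {f g : UnitAddCircle → ℝ} (hfg : ∀ x, f x ≤ g x) :
    sternMean n f ≤ sternMean n g :=
  mul_le_mul_of_nonneg_left (Finset.sum_le_sum fun _ _ =>
    mul_le_mul_of_nonneg_left (hfg _) (Nat.cast_nonneg _)) (by positivity)

lemma abs_sternMean_le (n : ℕ) {g : UnitAddCircle → ℝ} {ε : ℝ} (hg : ∀ x, |g x| ≤ ε) :
    |sternMean n g| ≤ ε := by
  rw [abs_le]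
  constructor
  · simpa [sternMean_const] using sternMean_mono n fun x => neg_le_of_abs_le (hg x)
  · simpa [sternMean_const] using sternMean_mono n fun x => le_of_abs_le (hg x)

lemma sternMean_sub (n : ℕ) (f g : UnitAddCircle → ℝ) :
    sternMean n f - sternMean n g = sternMean n (fun x => f x - g x) := by
  simp only [sternMean, ← mul_sub, ← Finset.sum_sub_distrib]

lemma sum_stern_row (n : ℕ) : ∑ m ∈ Finset.range (2 ^ n), stern (2 ^ n + m) = 3 ^ n := by
  have h := sternMean_const n 1
  simp only [sternMean, mul_one] at h
  exact_mod_cast ((inv_mul_eq_one₀ (by positivity)).mp h).symm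

lemma cauchySeq_sternMean (f : C(UnitAddCircle, ℝ)) : CauchySeq fun n => sternMean n f := by
  rw [Metric.cauchySeq_iff']
  intro ε hε
  obtain ⟨δ, hδ, hfδ⟩ := Metric.uniformContinuous_iff.mp
    (CompactSpace.uniformContinuous_of_continuous f.continuous) (ε / 2) (half_pos hε)
  obtain ⟨N, hN⟩ := exists_pow_lt_of_lt_one hδ (by norm_num : (2⁻¹ : ℝ) < 1)
  have hosc (x y : UnitAddCircle) (hxy : dist y x ≤ ((2 : ℝ) ^ N)⁻¹) : |f y - f x| ≤ ε / 2 := by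
    rw [← inv_pow] at hxy
    exact (Real.dist_eq _ _ ▸ hfδ (hxy.trans_lt hN)).le
  refine ⟨N, fun n hn => ?_⟩
  obtain ⟨k, rfl⟩ := Nat.exists_eq_add_of_le hn
  have hclose (x : UnitAddCircle) : |iterThreePointAvg dyadicStep N k f x - f x| ≤ ε / 2 :=
    abs_iterThreePointAvg_sub_le (r := fun i => ((2 : ℝ) ^ i)⁻¹) norm_dyadicStep_add_le
      (fun _ => by positivity) k N x (hosc x)
  calc dist (sternMean (N + k) f) (sternMean N f)
      = |sternMean N fun x => iterThreePointAvg dyadicStep N k f x - f x| := by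
        rw [Real.dist_eq, sternMean_add, sternMean_sub]
    _ ≤ ε / 2 := abs_sternMean_le N hclose
    _ < ε := half_lt_self hε

instance isProbabilityMeasure_sternMeasure (n : ℕ) : IsProbabilityMeasure (sternMeasure n) := by
  constructor
  simp only [sternMeasure, Measure.smul_apply, Measure.coe_finsetSum, Finset.sum_apply,
    measure_univ, smul_eq_mul, mul_one]
  rw [← Nat.cast_sum, sum_stern_row, Nat.cast_pow, Nat.cast_ofNat]
  exact ENNReal.inv_mul_cancel (by positivity) (by simp)

lemma integral_sternMeasure (f : C(UnitAddCircle, ℝ)) (n : ℕ) :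
    ∫ x, f x ∂(sternMeasure n) = sternMean n f := by
  have hint : ∀ (c : ℕ) (x : UnitAddCircle), Integrable f ((c : ℝ≥0∞) • Measure.dirac x) :=
    fun c x => ((BoundedContinuousFunction.mkOfCompact f).integrable _).smul_measure
      (ENNReal.natCast_ne_top c)
  rw [sternMeasure, integral_smul_measure, integral_finsetSum_measure fun m _ => hint _ _]
  simp [sternMean, integral_smul_measure, integral_dirac, ENNReal.toReal_inv]

/-- The sequence (μ_n) of probability measures on the 1-torus converges weakly to a
probability measure μ: the integrals of every continuous test function converge. -/
theorem sternMeasure_weak_limit :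
    ∃ μ : Measure UnitAddCircle, IsProbabilityMeasure μ ∧
      ∀ f : C(UnitAddCircle, ℝ),
        Tendsto (fun n => ∫ x, f x ∂(sternMeasure n)) atTop (𝓝 (∫ x, f x ∂μ)) := by
  obtain ⟨μ, φ, hφ, hμ⟩ := CompactSpace.tendsto_subseq (X := ProbabilityMeasure UnitAddCircle)
    fun n => ⟨sternMeasure n, inferInstance⟩
  refine ⟨μ, inferInstance, fun f => ?_⟩
  obtain ⟨L, hL⟩ := cauchySeq_tendsto_of_complete (cauchySeq_sternMean f)
  have hsub : Tendsto (fun n => ∫ x, f x ∂sternMeasure (φ n)) atTop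
      (𝓝 (∫ x, f x ∂(μ : Measure UnitAddCircle))) :=
    ProbabilityMeasure.tendsto_iff_forall_integral_tendsto.mp hμ
      (ContinuousMap.equivBoundedOfCompact _ _ f)
  simp only [integral_sternMeasure] at hsub ⊢
  rwa [tendsto_nhds_unique (hL.comp hφ.tendsto_atTop) hsub] at hL
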